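/- arXiv:2102.08243 — 2 statements merged into one kernel-verified Lean document; each statement's English description precedes it below -/
import Mathlib

section
/- Let Γ : L × [D] → R be a bipartite graph with finite left side L, finite right side R and left degree D ≥ 1 that has (r, K, ε) bounded right degree, where r ≥ 1 is an integer and ε > 0. Then for every set S ⊆ L with |S| ≤ K, the number of nodes x ∈ S that are deficient for S is at most |S|/2. -/
open Finset

/-- `|ℰ(S, p)|`: the number of edges `(x, i)` with `x ∈ S` whose right endpoint is `p`. -/
def edgeCount {L R ι : Type*} [DecidableEq L] [DecidableEq R] [Fintype ι]
    (Γ : L → ι → R) (S : Finset L) (p : R) : ℕ :=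
  ((S ×ˢ (Finset.univ : Finset ι)).filter fun q => Γ q.1 q.2 = p).card

/-- `excess_S(r) = Σ_{p ∈ R} max(|ℰ(S,p)| − r, 0)` (here `ℕ`-subtraction is truncated). -/
def excess {L R ι : Type*} [DecidableEq L] [Fintype R] [DecidableEq R] [Fintype ι]
    (Γ : L → ι → R) (S : Finset L) (r : ℕ) : ℕ :=
  ∑ p : R, (edgeCount Γ S p - r)

/-- The graph has `(r, K, ε)` bounded right degree if `excess_S(r) ≤ ε·D·|S|`
for every `S ⊆ L` with `|S| ≤ K`, where `D` is the left degree. -/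
def BoundedRightDegree {L R ι : Type*} [DecidableEq L] [Fintype R] [DecidableEq R] [Fintype ι]
    (Γ : L → ι → R) (r K : ℕ) (ε : ℝ) : Prop :=
  ∀ S : Finset L, S.card ≤ K →
    (excess Γ S r : ℝ) ≤ ε * (Fintype.card ι : ℝ) * (S.card : ℝ)

/-- A right node `p` is heavy for `S` if it has more than `2r` distinct neighbors in `S`. -/
def Heavy {L R ι : Type*} (Γ : L → ι → R) (S : Finset L) (r : ℕ) (p : R) : Prop :=
  2 * r < {x : L | x ∈ S ∧ ∃ i : ι, Γ x i = p}.ncard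

/-- A left node `x` is deficient for `S` if at least `4εD` of its edge labels `i`
lead to a right node that is heavy for `S`. -/
def Deficient {L R ι : Type*} [Fintype ι] (Γ : L → ι → R) (S : Finset L) (r : ℕ) (ε : ℝ)
    (x : L) : Prop :=
  4 * ε * (Fintype.card ι : ℝ) ≤ ({i : ι | Heavy Γ S r (Γ x i)}.ncard : ℝ)

/-! A heavy node `p` has more than `2r` edges from `S`, so `|ℰ(S,p)| < 2 (|ℰ(S,p)| - r)`: the
edges into heavy nodes number at most twice the excess, hence at most `2εD|S|`. Counting these
edges from the left instead, every deficient node contributes at least `4εD` of them, so there are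
at most `|S|/2` deficient nodes. -/

theorem Deficient.le_card_heavy_labels {L R ι : Type*} [Fintype ι] {Γ : L → ι → R}
    {S : Finset L} {r : ℕ} {ε : ℝ} {x : L} [DecidablePred (Heavy Γ S r)]
    (hx : Deficient Γ S r ε x) :
    4 * ε * Fintype.card ι ≤ #{i | Heavy Γ S r (Γ x i)} := by
  rwa [Deficient, ← coe_filter_univ, Set.ncard_coe_finset] at hx

section BipartiteGraph

variable {L R ι : Type*} [DecidableEq L] [DecidableEq R] [Fintype ι]
  (Γ : L → ι → R) (S : Finset L)

theorem ncard_neighbors_le_edgeCount (p : R) :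
    {x : L | x ∈ S ∧ ∃ i : ι, Γ x i = p}.ncard ≤ edgeCount Γ S p := by
  have h : {x : L | x ∈ S ∧ ∃ i : ι, Γ x i = p} =
      ↑(((S ×ˢ univ).filter fun q : L × ι => Γ q.1 q.2 = p).image Prod.fst) := by
    ext x
    simp
  rw [h, Set.ncard_coe_finset]
  exact card_image_le

theorem Heavy.two_mul_lt_edgeCount {r : ℕ} {p : R} (hp : Heavy Γ S r p) :
    2 * r < edgeCount Γ S p :=
  hp.trans_le (ncard_neighbors_le_edgeCount Γ S p)

theorem sum_card_filter_comp_eq_sum_edgeCount [Fintype R] (P : R → Prop) [DecidablePred P] :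
    ∑ x ∈ S, #{i | P (Γ x i)} = ∑ p with P p, edgeCount Γ S p := by
  set E := (S ×ˢ univ).filter fun q : L × ι => P (Γ q.1 q.2)
  have by_left : #E = ∑ x ∈ S, #{i | P (Γ x i)} := by
    simp only [E, card_filter, sum_product]
  have by_right : #E = ∑ p with P p, edgeCount Γ S p := by
    rw [card_eq_sum_card_fiberwise (s := E) (f := fun q : L × ι => Γ q.1 q.2)
      (t := univ.filter P)
      fun q hq => mem_filter.mpr ⟨mem_univ _, (mem_filter.mp hq).2⟩]
    refine sum_congr rfl fun p hp => congrArg card ?_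
    simp only [E, filter_filter]
    refine filter_congr fun q _ => ⟨And.right, fun hq => ⟨hq ▸ (mem_filter.mp hp).2, hq⟩⟩
  rw [← by_left, by_right]

theorem sum_edgeCount_heavy_le_two_mul_excess [Fintype R] (r : ℕ)
    [DecidablePred (Heavy Γ S r)] :
    ∑ p with Heavy Γ S r p, edgeCount Γ S p ≤ 2 * excess Γ S r :=
  calc ∑ p with Heavy Γ S r p, edgeCount Γ S p
      ≤ ∑ p with Heavy Γ S r p, 2 * (edgeCount Γ S p - r) :=
        sum_le_sum fun p hp => by
          have := (mem_filter.mp hp).2.two_mul_lt_edgeCount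
          omega
    _ = 2 * ∑ p with Heavy Γ S r p, (edgeCount Γ S p - r) := (mul_sum ..).symm
    _ ≤ 2 * excess Γ S r := Nat.mul_le_mul_left 2 (sum_le_sum_of_subset (subset_univ _))

theorem sum_card_heavy_labels_le_two_mul_excess [Fintype R] (r : ℕ)
    [DecidablePred (Heavy Γ S r)] :
    ∑ x ∈ S, #{i | Heavy Γ S r (Γ x i)} ≤ 2 * excess Γ S r :=
  (sum_card_filter_comp_eq_sum_edgeCount Γ S _).trans_le
    (sum_edgeCount_heavy_le_two_mul_excess Γ S r)

end BipartiteGraph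

theorem deficient_count_le_general
    {L R : Type*} [Fintype R] [DecidableEq L] [DecidableEq R]
    (D : ℕ) (hD : 1 ≤ D) (Γ : L → Fin D → R) (r K : ℕ) (ε : ℝ) (hε : 0 < ε)
    (hbd : BoundedRightDegree Γ r K ε) :
    ∀ S : Finset L, S.card ≤ K →
      ({x : L | x ∈ S ∧ Deficient Γ S r ε x}.ncard : ℝ) ≤ (S.card : ℝ) / 2 := by
  classical
  intro S hS
  set T := S.filter (Deficient Γ S r ε)
  have hT : {x : L | x ∈ S ∧ Deficient Γ S r ε x}.ncard = #T := by
    rw [← coe_filter, Set.ncard_coe_finset]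
  have hεD : 0 < ε * D := mul_pos hε (by exact_mod_cast hD)
  have key : #T * (4 * ε * D) ≤ 2 * (ε * D * #S) :=
    calc #T * (4 * ε * D)
        ≤ ∑ x ∈ T, (#{i | Heavy Γ S r (Γ x i)} : ℝ) := by
          simpa using card_nsmul_le_sum T _ _ fun x hx =>
            (mem_filter.mp hx).2.le_card_heavy_labels
      _ ≤ ∑ x ∈ S, (#{i | Heavy Γ S r (Γ x i)} : ℝ) :=
          sum_le_sum_of_subset_of_nonneg (filter_subset _ _) fun _ _ _ => by positivity
      _ ≤ 2 * excess Γ S r := by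
          exact_mod_cast sum_card_heavy_labels_le_two_mul_excess Γ S r
      _ ≤ 2 * (ε * D * #S) := by
          simpa using mul_le_mul_of_nonneg_left (hbd S hS) zero_le_two
  rw [hT]
  nlinarith

/-- If `Γ : L × [D] → R` (with `D ≥ 1`) has `(r, K, ε)` bounded right degree
(`r ≥ 1` an integer, `ε > 0`), then for every `S ⊆ L` with `|S| ≤ K`,
the number of nodes of `S` that are deficient for `S` is at most `|S|/2`. -/
theorem deficient_count_le
    {L R : Type*} [Fintype L] [Fintype R] [DecidableEq L] [DecidableEq R]
    (D : ℕ) (hD : 1 ≤ D) (Γ : L → Fin D → R) (r K : ℕ) (hr : 1 ≤ r) (ε : ℝ) (hε : 0 < ε)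
    (hbd : BoundedRightDegree Γ r K ε) :
    ∀ S : Finset L, S.card ≤ K →
      ({x : L | x ∈ S ∧ Deficient Γ S r ε x}.ncard : ℝ) ≤ (S.card : ℝ) / 2 :=
  deficient_count_le_general D hD Γ r K ε hε hbd
end

section
/- Let G be a bipartite graph Γ : L × [D] → R with finite left side L whose elements are labeled by distinct strings in {0,1}^n, with n ≥ 2, finite right side R and left degree D ≥ 1, and suppose G is a (K_max, (1−ε)D) expander, where 0 < ε < 1 and K_max ≥ 2. Let r = 2⌈log₂ K_max⌉ and let t be the smallest power of two with t ≥ (1/ε)(n−1)(r−1) and t ≥ 2. Then the graph G′ obtained from G by the G ↦ G′ transformation with parameters ε and r has left side L, right side of size |R|·t², left degree D′ = D·t, and admits ((1−5ε)·D′, 1) online matching up to size K_max. -/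
open Finset

/-- A graph is a `(K, γ)` expander if every `S ⊆ L` with `|S| ≤ K` has at least
`γ·|S|` neighbors. -/
def Expander {L R ι : Type*} [DecidableEq R] [Fintype ι]
    (Γ : L → ι → R) (K : ℕ) (γ : ℝ) : Prop :=
  ∀ S : Finset L, S.card ≤ K →
    γ * (S.card : ℝ) ≤
      (((S ×ˢ (Finset.univ : Finset ι)).image fun q => Γ q.1 q.2).card : ℝ)

/-- The graph `Γ : L → ι → R` admits `(ℓ, r)` online matching up to size `K` if
there is an assignment function `f` from (list of requests, left node) to sets of
edge labels such that: (1) nodes not in the list get the empty set; (2) a node in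
the list gets at least `ℓ` labels, and its assigned set is stable under extending
the list (within the size bound `K`); (3) for every right node `p` and every list,
at most `r` distinct listed nodes have an assigned edge ending in `p`. -/
def OnlineMatching {L R ι : Type*} (Γ : L → ι → R) (ℓ : ℝ) (r K : ℕ) : Prop :=
  ∃ f : List L → L → Finset ι,
    (∀ S : List L, S.length ≤ K → ∀ x : L,
      (x ∉ S → f S x = ∅) ∧
      (x ∈ S →
        (ℓ ≤ ((f S x).card : ℝ) ∧
         ∀ S' : List L, S'.length ≤ K → S <+: S' → f S x = f S' x))) ∧
    (∀ S : List L, S.length ≤ K → ∀ p : R,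
      {x : L | x ∈ S ∧ ∃ i ∈ f S x, Γ x i = p}.ncard ≤ r)

/-- The polynomial over a field `F` whose coefficients are the bits of `bits`
(each interpreted as `0` or `1` in `F`), evaluated at `a`. -/
noncomputable def polyEval {n : ℕ} {F : Type*} [Field F] (bits : Fin n → Bool) (a : F) : F :=
  ∑ j : Fin n, (if bits j then (1 : F) else 0) * a ^ (j : ℕ)

/-! Matching in `G` is a levelled greedy algorithm: an arriving node takes the least level
`π < m = ⌈log₂ K⌉` at which at most `2εD` of its edges end in a right node already used twice at
level `π`, and keeps its other edges at that level. Every right node is then used at most twice per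
level, hence at most `2m = r` times. A level always exists: if all failed, the expansion of
`A ∪ B`, where `B` is the set of nodes at level `π` and `A` the newcomer together with the nodes
above `π`, gives `|A| < |B|`, so the nodes at or above `π + 1` are fewer than half of those at or
above `π`; halving `m` times contradicts `|S| ≤ K ≤ 2^m`.

In `G'` a node `x` keeps, for each edge `i` it holds in `G`, the edges `(i, a)` for the points `a`
where its polynomial differs from those of the at most `r - 1` earlier nodes sharing the endpoint
of `i`. Distinct polynomials of degree `< n` agree on at most `n - 1` points, so each `i` loses at
most `(r - 1)(n - 1) ≤ εt` of its `t` values of `a`, and no right node of `G'` is used twice. -/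

section Neighbors

variable {L R ι : Type*} [DecidableEq R] [Fintype ι] {Γ : L → ι → R}

def neighbors (Γ : L → ι → R) (S : Finset L) : Finset R :=
  (S ×ˢ univ).image fun q => Γ q.1 q.2

theorem card_neighbors_le (S : Finset L) : #(neighbors Γ S) ≤ #S * Fintype.card ι :=
  card_image_le.trans (card_product _ _).le

theorem card_neighbors_union_le [DecidableEq L] (A B : Finset L) :
    #(neighbors Γ (A ∪ B)) ≤ #(neighbors Γ B) + ∑ z ∈ A, #{i | Γ z i ∉ neighbors Γ B} := by
  set out : L → Finset ι := fun z => {i | Γ z i ∉ neighbors Γ B}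
  have hsub : neighbors Γ (A ∪ B) ⊆ neighbors Γ B ∪ A.biUnion fun z => (out z).image (Γ z) := by
    intro p hp
    obtain ⟨⟨z, i⟩, hzi, rfl⟩ := mem_image.1 hp
    by_cases hB : Γ z i ∈ neighbors Γ B
    · exact mem_union_left _ hB
    · have hzA : z ∈ A := by
        rcases mem_union.1 (mem_product.1 hzi).1 with h | h
        · exact h
        · exact absurd (mem_image_of_mem _ (mem_product.2 ⟨h, mem_univ i⟩)) hB
      exact mem_union_right _
        (mem_biUnion.2 ⟨z, hzA, mem_image_of_mem _ (mem_filter.2 ⟨mem_univ i, hB⟩)⟩)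
  calc #(neighbors Γ (A ∪ B))
      ≤ #(neighbors Γ B) + #(A.biUnion fun z => (out z).image (Γ z)) :=
        (card_le_card hsub).trans (card_union_le _ _)
    _ ≤ #(neighbors Γ B) + ∑ z ∈ A, #(out z) :=
        Nat.add_le_add_left (card_biUnion_le.trans (sum_le_sum fun _ _ => card_image_le)) _

theorem Expander.card_lt_card [DecidableEq L] {K : ℕ} {ε : ℝ}
    (hexp : Expander Γ K ((1 - ε) * Fintype.card ι)) (hε : 0 < ε) {A B : Finset L}
    (hAB : Disjoint A B) (hK : #(A ∪ B) ≤ K) (hA : A.Nonempty)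
    (hout : ∀ z ∈ A, (#{i | Γ z i ∉ neighbors Γ B} : ℝ) < (1 - 2 * ε) * Fintype.card ι) :
    #A < #B := by
  set D := Fintype.card ι
  have hlower : (1 - ε) * (D : ℝ) * (#A + #B) ≤ #(neighbors Γ (A ∪ B)) := by
    have := hexp _ hK
    rwa [card_union_of_disjoint hAB, Nat.cast_add] at this
  have hupper : (#(neighbors Γ (A ∪ B)) : ℝ) < #B * (D : ℝ) + #A * ((1 - 2 * ε) * D) := by
    have h₁ : (#(neighbors Γ (A ∪ B)) : ℝ) ≤
        #(neighbors Γ B) + ∑ z ∈ A, (#{i | Γ z i ∉ neighbors Γ B} : ℝ) := by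
      exact_mod_cast card_neighbors_union_le (Γ := Γ) A B
    have h₂ : (#(neighbors Γ B) : ℝ) ≤ #B * (D : ℝ) := by
      exact_mod_cast card_neighbors_le (Γ := Γ) B
    have h₃ := sum_lt_sum_of_nonempty hA hout
    rw [sum_const, nsmul_eq_mul] at h₃
    linarith
  have : ε * D * #A < ε * D * #B := by nlinarith
  exact_mod_cast lt_of_mul_lt_mul_left this (by positivity)

end Neighbors

theorem two_pow_mul_le_of_forall_two_mul_le {g : ℕ → ℕ} {m : ℕ}
    (h : ∀ k < m, 2 * g (k + 1) ≤ g k) : 2 ^ m * g m ≤ g 0 := by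
  induction m with
  | zero => simp
  | succ m ih =>
    calc 2 ^ (m + 1) * g (m + 1) = 2 ^ m * (2 * g (m + 1)) := by ring
      _ ≤ 2 ^ m * g m := Nat.mul_le_mul_left _ (h m (lt_add_one m))
      _ ≤ g 0 := ih fun k hk => h k (hk.trans (lt_add_one m))

namespace LevelGreedy

variable {L R ι : Type*}

/-- `σ z = some (π, C)`: the node `z` has been served at level `π` with the edge set `C`. -/
abbrev State (L ι : Type*) := L → Option (ℕ × Finset ι)

def Extends (σ σ' : State L ι) : Prop :=
  ∀ z v, σ z = some v → σ' z = some v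

theorem Extends.refl (σ : State L ι) : Extends σ σ := fun _ _ h => h

theorem Extends.trans {σ σ' σ'' : State L ι} (h : Extends σ σ') (h' : Extends σ' σ'') :
    Extends σ σ'' := fun z v hz => h' z v (h z v hz)

variable [Fintype L] {σ : State L ι} {z : L} {π : ℕ}

open Classical in
noncomputable def atLevel (σ : State L ι) (π : ℕ) : Finset L :=
  {z | ∃ C, σ z = some (π, C)}

open Classical in
noncomputable def fromLevel (σ : State L ι) (π : ℕ) : Finset L :=
  {z | ∃ π' C, π ≤ π' ∧ σ z = some (π', C)}

theorem mem_atLevel : z ∈ atLevel σ π ↔ ∃ C, σ z = some (π, C) := by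
  simp [atLevel]

theorem mem_fromLevel :
    z ∈ fromLevel σ π ↔ ∃ π' C, π ≤ π' ∧ σ z = some (π', C) := by
  simp [fromLevel]

theorem fromLevel_eq_union [DecidableEq L] (σ : State L ι) (π : ℕ) :
    fromLevel σ π = fromLevel σ (π + 1) ∪ atLevel σ π := by
  ext z
  simp only [mem_fromLevel, mem_atLevel, mem_union]
  constructor
  · rintro ⟨π', C, hle, h⟩
    rcases hle.eq_or_lt with rfl | hlt
    · exact .inr ⟨C, h⟩
    · exact .inl ⟨π', C, hlt, h⟩
  · rintro (⟨π', C, hle, h⟩ | ⟨C, h⟩)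
    · exact ⟨π', C, by omega, h⟩
    · exact ⟨π, C, le_rfl, h⟩

theorem disjoint_fromLevel_succ_atLevel (σ : State L ι) (π : ℕ) :
    Disjoint (fromLevel σ (π + 1)) (atLevel σ π) := by
  refine disjoint_left.2 fun z hz hz' => ?_
  obtain ⟨π', C, hle, h⟩ := mem_fromLevel.1 hz
  obtain ⟨C', h'⟩ := mem_atLevel.1 hz'
  rw [h] at h'
  have := (Prod.mk.inj (Option.some.inj h')).1
  omega

variable [Fintype ι] (Γ : L → ι → R) (ε : ℝ) (m : ℕ)

open Classical in
noncomputable def users (σ : State L ι) (p : R) (π : ℕ) : Finset L :=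
  {z | ∃ C, σ z = some (π, C) ∧ ∃ i ∈ C, Γ z i = p}

open Classical in
noncomputable def free (σ : State L ι) (y : L) (π : ℕ) : Finset ι :=
  {i | #(users Γ σ (Γ y i) π) ≤ 1}

def IsGood (σ : State L ι) (y : L) (π : ℕ) : Prop :=
  (1 - 2 * ε) * Fintype.card ι ≤ (#(free Γ σ y π) : ℝ)

open Classical in
/-- The least good level, or `m` if no level below `m` is good; for requests of at most `K` nodes
the fallback never happens (`level_lt_of_run_eq_some`). -/
noncomputable def level (σ : State L ι) (y : L) : ℕ :=
  Nat.find (⟨m, .inl le_rfl⟩ : ∃ π, m ≤ π ∨ IsGood Γ ε σ y π)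

open Classical in
noncomputable def step (σ : State L ι) (y : L) : State L ι :=
  if (σ y).isSome then σ
  else Function.update σ y (some (level Γ ε m σ y, free Γ σ y (level Γ ε m σ y)))

noncomputable def run (S : List L) : State L ι :=
  S.foldl (step Γ ε m) fun _ => none

variable {Γ ε m} {σ' : State L ι} {y : L}

theorem mem_users {p : R} :
    z ∈ users Γ σ p π ↔ ∃ C, σ z = some (π, C) ∧ ∃ i ∈ C, Γ z i = p := by
  simp [users]

theorem mem_free {i : ι} : i ∈ free Γ σ y π ↔ #(users Γ σ (Γ y i) π) ≤ 1 := by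
  simp [free]

theorem level_le (h : IsGood Γ ε σ y π) : level Γ ε m σ y ≤ π := by
  classical
  exact Nat.find_min' _ (.inr h)

theorem isGood_level (h : level Γ ε m σ y < m) : IsGood Γ ε σ y (level Γ ε m σ y) := by
  classical
  exact (Nat.find_spec (⟨m, .inl le_rfl⟩ : ∃ π, m ≤ π ∨ IsGood Γ ε σ y π)).resolve_left
    (not_le.2 h)

theorem not_isGood_of_lt_level (h : π < level Γ ε m σ y) : ¬IsGood Γ ε σ y π := by
  classical
  exact fun hπ => (Nat.find_min _ h) (.inr hπ)

theorem step_of_isSome (h : (σ y).isSome) : step Γ ε m σ y = σ := by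
  simp [step, h]

theorem step_of_eq_none [DecidableEq L] (h : σ y = none) :
    step Γ ε m σ y = Function.update σ y
      (some (level Γ ε m σ y, free Γ σ y (level Γ ε m σ y))) := by
  rw [step, if_neg (by simp [h])]
  congr
  exact Subsingleton.elim _ _

theorem step_eq_some {v : ℕ × Finset ι} (h : step Γ ε m σ y z = some v) :
    σ z = some v ∨
      σ z = none ∧ z = y ∧ v = (level Γ ε m σ y, free Γ σ y (level Γ ε m σ y)) := by
  classical
  rcases Option.eq_none_or_eq_some (σ y) with hy | ⟨w, hy⟩
  · rw [step_of_eq_none hy] at h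
    by_cases hzy : z = y
    · subst hzy
      simp_all
    · rw [Function.update_of_ne hzy] at h
      exact .inl h
  · rw [step_of_isSome (by simp [hy])] at h
    exact .inl h

theorem extends_step (σ : State L ι) (y : L) : Extends σ (step Γ ε m σ y) := by
  classical
  intro z v hz
  rcases Option.eq_none_or_eq_some (σ y) with hy | ⟨w, hy⟩
  · rw [step_of_eq_none hy, Function.update_of_ne (by rintro rfl; simp [hy] at hz)]
    exact hz
  · rw [step_of_isSome (by simp [hy])]
    exact hz

theorem extends_foldl_step (σ : State L ι) (T : List L) :
    Extends σ (T.foldl (step Γ ε m) σ) := by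
  induction T generalizing σ with
  | nil => exact Extends.refl σ
  | cons y T ih => exact (extends_step σ y).trans (ih _)

theorem run_append_singleton (T : List L) (y : L) :
    run Γ ε m (T ++ [y]) = step Γ ε m (run Γ ε m T) y := by
  simp [run, List.foldl_append]

theorem extends_run_of_prefix {S S' : List L} (h : S <+: S') :
    Extends (run Γ ε m S) (run Γ ε m S') := by
  obtain ⟨T, rfl⟩ := h
  simp only [run, List.foldl_append]
  exact extends_foldl_step _ T

theorem isSome_run_iff (Γ : L → ι → R) (ε : ℝ) (m : ℕ) (S : List L) (x : L) :
    (run Γ ε m S x).isSome ↔ x ∈ S := by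
  classical
  induction S using List.reverseRecOn with
  | nil => simp [run]
  | append_singleton T y ih =>
    rw [run_append_singleton, List.mem_append, List.mem_singleton, ← ih]
    rcases Option.eq_none_or_eq_some (run Γ ε m T y) with hy | ⟨w, hy⟩
    · rw [step_of_eq_none hy]
      by_cases hxy : x = y <;> simp [hxy]
    · rw [step_of_isSome (by simp [hy]), iff_self_or]
      rintro rfl
      simp [hy]

theorem run_eq_none_iff (Γ : L → ι → R) (ε : ℝ) (m : ℕ) (S : List L) (x : L) :
    run Γ ε m S x = none ↔ x ∉ S := by
  rw [← isSome_run_iff Γ ε m, Option.not_isSome_iff_eq_none]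

theorem run_induction (P : State L ι → Prop) (hnil : P fun _ => none)
    (hstep : ∀ σ y, P σ → P (step Γ ε m σ y)) (S : List L) : P (run Γ ε m S) := by
  suffices ∀ σ, P σ → P (S.foldl (step Γ ε m) σ) from this _ hnil
  induction S with
  | nil => exact fun σ h => h
  | cons y T ih => exact fun σ h => ih _ (hstep σ y h)

theorem users_mono (h : Extends σ σ') (p : R) (π : ℕ) : users Γ σ p π ⊆ users Γ σ' p π := by
  intro z hz
  obtain ⟨C, hC, hi⟩ := mem_users.1 hz
  exact mem_users.2 ⟨C, h z _ hC, hi⟩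

theorem not_isGood_of_extends (h : Extends σ σ') (hbad : ¬IsGood Γ ε σ y π) :
    ¬IsGood Γ ε σ' y π := by
  have hfree : free Γ σ' y π ⊆ free Γ σ y π := fun _ hi =>
    mem_free.2 ((card_le_card (users_mono h _ _)).trans (mem_free.1 hi))
  exact fun hgood => hbad (hgood.trans (by exact_mod_cast card_le_card hfree))

theorem card_users_step_le (hσ : ∀ p π, #(users Γ σ p π) ≤ 2) (y : L) (p : R) (π : ℕ) :
    #(users Γ (step Γ ε m σ y) p π) ≤ 2 := by
  classical
  set σ' := step Γ ε m σ y
  have hsub : users Γ σ' p π ⊆ insert y (users Γ σ p π) := by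
    intro z hz
    obtain ⟨C, hC, hi⟩ := mem_users.1 hz
    rcases step_eq_some hC with hold | ⟨-, rfl, -⟩
    · exact mem_insert_of_mem (mem_users.2 ⟨C, hold, hi⟩)
    · exact mem_insert_self _ _
  by_cases hnew : y ∈ users Γ σ' p π ∧ y ∉ users Γ σ p π
  · obtain ⟨C, hC, i, hi, rfl⟩ := mem_users.1 hnew.1
    rcases step_eq_some hC with hold | ⟨-, -, hv⟩
    · exact absurd (mem_users.2 ⟨C, hold, i, hi, rfl⟩) hnew.2
    · obtain ⟨hπ, rfl⟩ := Prod.mk.inj hv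
      rw [← hπ] at hi
      have := mem_free.1 hi
      calc #(users Γ σ' (Γ y i) π) ≤ #(insert y (users Γ σ (Γ y i) π)) := card_le_card hsub
        _ ≤ #(users Γ σ (Γ y i) π) + 1 := card_insert_le _ _
        _ ≤ 2 := by omega
  · refine (card_le_card fun z hz => ?_).trans (hσ p π)
    rcases mem_insert.1 (hsub hz) with rfl | h
    · by_contra h
      exact hnew ⟨hz, h⟩
    · exact h

theorem card_users_run_le (S : List L) (p : R) (π : ℕ) : #(users Γ (run Γ ε m S) p π) ≤ 2 :=
  run_induction (fun σ => ∀ p π, #(users Γ σ p π) ≤ 2) (by simp [users])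
    (fun _ y hσ => card_users_step_le hσ y) S p π

theorem card_run_of_lt (S : List L) {C : Finset ι} (hz : run Γ ε m S z = some (π, C))
    (hπ : π < m) : (1 - 2 * ε) * Fintype.card ι ≤ (#C : ℝ) := by
  refine run_induction (fun σ => ∀ z π C, σ z = some (π, C) → π < m →
      (1 - 2 * ε) * Fintype.card ι ≤ (#C : ℝ)) (by simp) (fun σ y hσ z π C h hπ => ?_)
    S z π C hz hπ
  rcases step_eq_some h with hold | ⟨-, -, hv⟩
  · exact hσ z π C hold hπ
  · obtain ⟨rfl, rfl⟩ := Prod.mk.inj hv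
    exact isGood_level hπ

theorem not_isGood_run_of_lt (S : List L) {C : Finset ι} (hz : run Γ ε m S z = some (π, C))
    {π' : ℕ} (hπ' : π' < π) : ¬IsGood Γ ε (run Γ ε m S) z π' := by
  refine run_induction (fun σ => ∀ z π C, σ z = some (π, C) → ∀ π' < π, ¬IsGood Γ ε σ z π')
    (by simp) (fun σ y hσ z π C h π' hπ' => ?_) S z π C hz π' hπ'
  refine not_isGood_of_extends (extends_step σ y) ?_
  rcases step_eq_some h with hold | ⟨-, rfl, hv⟩
  · exact hσ z π C hold π' hπ'
  · obtain ⟨rfl, rfl⟩ := Prod.mk.inj hv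
    exact not_isGood_of_lt_level hπ'

theorem card_insert_fromLevel_run_le [DecidableEq L] (T : List L) (y : L) (π : ℕ) :
    #(insert y (fromLevel (run Γ ε m T) π)) ≤ T.length + 1 := by
  have hsub : fromLevel (run Γ ε m T) π ⊆ T.toFinset := by
    intro z hz
    obtain ⟨π', C, -, h⟩ := mem_fromLevel.1 hz
    exact List.mem_toFinset.2 ((isSome_run_iff Γ ε m T z).1 (by simp [h]))
  calc #(insert y (fromLevel (run Γ ε m T) π)) ≤ #(fromLevel (run Γ ε m T) π) + 1 :=
        card_insert_le _ _
    _ ≤ T.length + 1 := by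
        have := (card_le_card hsub).trans T.toFinset_card_le
        omega

theorem filter_notMem_neighbors_atLevel_subset_free [DecidableEq R] (σ : State L ι) (z : L)
    (π : ℕ) :
    ({i | Γ z i ∉ neighbors Γ (atLevel σ π)} : Finset ι) ⊆ free Γ σ z π := by
  intro i hi
  rw [mem_free]
  by_contra h
  obtain ⟨u, hu⟩ := card_pos.1 (by omega : 0 < #(users Γ σ (Γ z i) π))
  obtain ⟨C, hC, j, -, hj⟩ := mem_users.1 hu
  refine (mem_filter.1 hi).2 (mem_image.2 ⟨(u, j), mem_product.2 ⟨?_, mem_univ j⟩, hj⟩)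
  exact mem_atLevel.2 ⟨C, hC⟩

variable [DecidableEq R] {K : ℕ}

theorem two_mul_card_insert_fromLevel_succ_lt [DecidableEq L]
    (hexp : Expander Γ K ((1 - ε) * Fintype.card ι)) (hε : 0 < ε) {T : List L} (hy : y ∉ T)
    (hT : T.length < K) (hbad : ¬IsGood Γ ε (run Γ ε m T) y π) :
    2 * #(insert y (fromLevel (run Γ ε m T) (π + 1))) <
      #(insert y (fromLevel (run Γ ε m T) π)) := by
  set σ := run Γ ε m T
  set A := insert y (fromLevel σ (π + 1))
  set B := atLevel σ π
  have hyσ : σ y = none := (run_eq_none_iff Γ ε m T y).2 hy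
  have hunion : insert y (fromLevel σ π) = A ∪ B := by rw [fromLevel_eq_union, insert_union]
  have hAB : Disjoint A B :=
    disjoint_insert_left.2 ⟨by simp [B, mem_atLevel, hyσ], disjoint_fromLevel_succ_atLevel σ π⟩
  have hK : #(A ∪ B) ≤ K := by
    have := card_insert_fromLevel_run_le (Γ := Γ) (ε := ε) (m := m) T y π
    rw [hunion] at this
    omega
  have hout (z : L) (hz : z ∈ A) :
      (#{i | Γ z i ∉ neighbors Γ B} : ℝ) < (1 - 2 * ε) * Fintype.card ι := by
    have hbadz : ¬IsGood Γ ε σ z π := by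
      rcases mem_insert.1 hz with rfl | hz
      · exact hbad
      · obtain ⟨π', C, hle, h⟩ := mem_fromLevel.1 hz
        exact not_isGood_run_of_lt T h (by omega)
    exact (Nat.cast_le.2 (card_le_card
      (filter_notMem_neighbors_atLevel_subset_free σ z π))).trans_lt (not_le.1 hbadz)
  have := hexp.card_lt_card hε hAB hK ⟨y, mem_insert_self _ _⟩ hout
  rw [hunion, card_union_of_disjoint hAB]
  omega

theorem exists_isGood_lt (hexp : Expander Γ K ((1 - ε) * Fintype.card ι)) (hε : 0 < ε)
    (hKm : K + 1 < 2 ^ (m + 1)) {T : List L} (hy : y ∉ T) (hT : T.length < K) :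
    ∃ π < m, IsGood Γ ε (run Γ ε m T) y π := by
  classical
  by_contra! hbad
  set g : ℕ → ℕ := fun π => #(insert y (fromLevel (run Γ ε m T) π)) + 1
  have hhalf (π : ℕ) (hπ : π < m) : 2 * g (π + 1) ≤ g π := by
    have := two_mul_card_insert_fromLevel_succ_lt hexp hε hy hT (hbad π hπ)
    simp only [g]
    omega
  have hgm : 2 ≤ g m := by
    have := card_pos.2 ⟨y, mem_insert_self y (fromLevel (run Γ ε m T) m)⟩
    simp only [g]
    omega
  have hg0 : g 0 ≤ K + 1 := by
    have := card_insert_fromLevel_run_le (Γ := Γ) (ε := ε) (m := m) T y 0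
    simp only [g]
    omega
  have := two_pow_mul_le_of_forall_two_mul_le hhalf
  have : 2 ^ (m + 1) ≤ 2 ^ m * g m := by
    rw [pow_succ]
    exact Nat.mul_le_mul_left _ hgm
  omega

theorem level_lt_of_run_eq_some (hexp : Expander Γ K ((1 - ε) * Fintype.card ι)) (hε : 0 < ε)
    (hKm : K + 1 < 2 ^ (m + 1)) {S : List L} (hS : S.length ≤ K) {C : Finset ι}
    (hz : run Γ ε m S z = some (π, C)) : π < m := by
  induction S using List.reverseRecOn generalizing z π C with
  | nil => simp [run] at hz
  | append_singleton T y ih =>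
    rw [List.length_append, List.length_singleton] at hS
    rw [run_append_singleton] at hz
    rcases step_eq_some hz with hold | ⟨hnone, rfl, hv⟩
    · exact ih (by omega) hold
    · obtain ⟨π₀, hπ₀, hgood⟩ :=
        exists_isGood_lt hexp hε hKm ((run_eq_none_iff Γ ε m T _).1 hnone) (by omega)
      rw [(Prod.mk.inj hv).1]
      exact (level_le hgood).trans_lt hπ₀

end LevelGreedy

open LevelGreedy in
theorem Expander.onlineMatching {L R ι : Type*} [Fintype L] [DecidableEq R] [Fintype ι]
    {Γ : L → ι → R} {K m : ℕ} {ε : ℝ} (hexp : Expander Γ K ((1 - ε) * Fintype.card ι))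
    (hε : 0 < ε) (hKm : K + 1 < 2 ^ (m + 1)) :
    OnlineMatching Γ ((1 - 2 * ε) * Fintype.card ι) (2 * m) K := by
  classical
  refine ⟨fun S x => ((run Γ ε m S x).map Prod.snd).getD ∅,
    fun S hS x => ⟨fun hx => ?_, fun hx => ?_⟩, fun S hS p => ?_⟩ <;> dsimp only
  · rw [(run_eq_none_iff Γ ε m S x).2 hx]
    rfl
  · obtain ⟨⟨π, C⟩, hC⟩ := Option.isSome_iff_exists.1 ((isSome_run_iff Γ ε m S x).2 hx)
    refine ⟨?_, fun S' _ hSS' => ?_⟩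
    · simpa [hC] using card_run_of_lt S hC (level_lt_of_run_eq_some hexp hε hKm hS hC)
    · simp [hC, extends_run_of_prefix hSS' x _ hC]
  · have hsub : {x | x ∈ S ∧ ∃ i ∈ ((run Γ ε m S x).map Prod.snd).getD ∅, Γ x i = p} ⊆
        ↑((range m).biUnion (users Γ (run Γ ε m S) p)) := by
      rintro x ⟨hx, i, hi, rfl⟩
      obtain ⟨⟨π, C⟩, hC⟩ := Option.isSome_iff_exists.1 ((isSome_run_iff Γ ε m S x).2 hx)
      rw [hC] at hi
      exact mem_biUnion.2 ⟨π, mem_range.2 (level_lt_of_run_eq_some hexp hε hKm hS hC),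
        mem_users.2 ⟨C, hC, i, hi, rfl⟩⟩
    calc _ ≤ #((range m).biUnion (users Γ (run Γ ε m S) p)) :=
          (Set.ncard_le_ncard hsub (finite_toSet _)).trans (Set.ncard_coe_finset _).le
      _ ≤ ∑ π ∈ range m, #(users Γ (run Γ ε m S) p π) := card_biUnion_le
      _ ≤ ∑ _π ∈ range m, 2 := sum_le_sum fun π _ => card_users_run_le S p π
      _ = 2 * m := by rw [sum_const, card_range, smul_eq_mul, mul_comm]

theorem succ_lt_two_pow_clog_succ {K : ℕ} (hK : 2 ≤ K) :
    K + 1 < 2 ^ (Nat.clog 2 K + 1) := by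
  have hKle : K ≤ 2 ^ Nat.clog 2 K := Nat.le_pow_clog one_lt_two K
  have := Nat.one_lt_two_pow_iff.2 (Nat.clog_pos one_lt_two hK).ne'
  rw [pow_succ]
  omega

theorem OnlineMatching.mono {L R ι : Type*} {Γ : L → ι → R} {ℓ ℓ' : ℝ} {r K : ℕ}
    (h : OnlineMatching Γ ℓ r K) (hℓ : ℓ' ≤ ℓ) : OnlineMatching Γ ℓ' r K := by
  obtain ⟨f, hf₁, hf₂⟩ := h
  exact ⟨f, fun S hS x => ⟨(hf₁ S hS x).1,
    fun hx => ⟨hℓ.trans ((hf₁ S hS x).2 hx).1, ((hf₁ S hS x).2 hx).2⟩⟩, hf₂⟩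

section CodeLift

variable {L R ι F V : Type*}

theorem card_sub_mul_le_ncard_forall_notMem [Finite F] {d : ℕ} (Y : Finset L) (B : L → Set F)
    (hB : ∀ y ∈ Y, (B y).ncard ≤ d) :
    Nat.card F - #Y * d ≤ {a | ∀ y ∈ Y, a ∉ B y}.ncard := by
  have hcompl : {a | ∀ y ∈ Y, a ∉ B y} = (⋃ y ∈ Y, B y)ᶜ := by ext; simp
  have hunion : (⋃ y ∈ Y, B y).ncard ≤ #Y * d :=
    (Y.set_ncard_biUnion_le B).trans (Finset.sum_le_card_nsmul _ _ _ hB)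
  rw [hcompl, Set.ncard_compl]
  omega

def prefixThrough [DecidableEq L] (S : List L) (x : L) : List L := S.take (S.idxOf x + 1)

variable [DecidableEq L] {S S' : List L} {x : L}

theorem prefixThrough_prefix (S : List L) (x : L) : prefixThrough S x <+: S :=
  List.take_prefix _ _

theorem mem_prefixThrough (hx : x ∈ S) : x ∈ prefixThrough S x :=
  (List.mem_take_iff_idxOf_lt hx).2 (Nat.lt_succ_self _)

theorem prefixThrough_of_notMem (hx : x ∉ S) : prefixThrough S x = S :=
  List.take_of_length_le (by rw [List.idxOf_eq_length_iff.2 hx]; omega)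

theorem prefixThrough_eq_of_prefix (hx : x ∈ S) (hS : S <+: S') :
    prefixThrough S' x = prefixThrough S x := by
  obtain ⟨T, rfl⟩ := hS
  rw [prefixThrough, prefixThrough, List.idxOf_append_of_mem hx,
    List.take_append_of_le_length (List.idxOf_lt_length_iff.2 hx)]

def Separates (Γ : L → ι → R) (h : L → F → V) (f : List L → L → Finset ι) (P : List L)
    (x : L) (i : ι) (a : F) : Prop :=
  ∀ y ∈ P, y ≠ x → (∃ j ∈ f P y, Γ y j = Γ x i) → h y a ≠ h x a

open Classical in
/-- Computed from the prefix of `S` ending at the first occurrence of `x`, so that it does not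
change as `S` grows. -/
noncomputable def codeLiftAssignment [Fintype F] (Γ : L → ι → R) (h : L → F → V)
    (f : List L → L → Finset ι) (S : List L) (x : L) : Finset (ι × F) :=
  {q ∈ f (prefixThrough S x) x ×ˢ univ | Separates Γ h f (prefixThrough S x) x q.1 q.2}

variable [Fintype F] {Γ : L → ι → R} {h : L → F → V} {f : List L → L → Finset ι}

theorem mem_codeLiftAssignment {q : ι × F} :
    q ∈ codeLiftAssignment Γ h f S x ↔
      q.1 ∈ f (prefixThrough S x) x ∧ Separates Γ h f (prefixThrough S x) x q.1 q.2 := by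
  simp [codeLiftAssignment]

theorem mul_le_card_codeLiftAssignment {r d : ℕ}
    (hd : ∀ x y, x ≠ y → {a | h x a = h y a}.ncard ≤ d) (hx : x ∈ S)
    (hr : ∀ p,
      {y | y ∈ prefixThrough S x ∧ ∃ j ∈ f (prefixThrough S x) y, Γ y j = p}.ncard ≤ r) :
    #(f (prefixThrough S x) x) * (Nat.card F - (r - 1) * d) ≤
      #(codeLiftAssignment Γ h f S x) := by
  classical
  set P := prefixThrough S x
  let sharers (i : ι) : Finset L := {y ∈ P.toFinset | y ≠ x ∧ ∃ j ∈ f P y, Γ y j = Γ x i}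
  have hsharers (i : ι) (hi : i ∈ f P x) : #(sharers i) ≤ r - 1 := by
    have hsub : (↑(insert x (sharers i)) : Set L) ⊆
        {y | y ∈ P ∧ ∃ j ∈ f P y, Γ y j = Γ x i} := by
      intro y hy
      simp only [coe_insert, coe_filter, List.mem_toFinset, Set.mem_insert_iff,
        Set.mem_ofPred_eq, sharers] at hy ⊢
      rcases hy with rfl | ⟨hyP, -, hy⟩
      · exact ⟨mem_prefixThrough hx, i, hi, rfl⟩
      · exact ⟨hyP, hy⟩
    have := (Set.ncard_le_ncard hsub (P.finite_toSet.subset fun y hy => hy.1)).trans (hr (Γ x i))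
    rw [Set.ncard_coe_finset, card_insert_of_notMem (by simp [sharers])] at this
    omega
  have hfresh (i : ι) (hi : i ∈ f P x) :
      Nat.card F - (r - 1) * d ≤ #{a | Separates Γ h f P x i a} := by
    have hset : ((({a | Separates Γ h f P x i a} : Finset F)) : Set F) =
        {a | ∀ y ∈ sharers i, a ∉ {a | h y a = h x a}} := by
      ext a
      simp [Separates, sharers]
    rw [← Set.ncard_coe_finset, hset]
    refine le_trans ?_
      (card_sub_mul_le_ncard_forall_notMem _ _ fun y hy => hd y x (mem_filter.1 hy).2.1)
    have := Nat.mul_le_mul_right d (hsharers i hi)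
    omega
  calc #(f P x) * (Nat.card F - (r - 1) * d)
      = ∑ _i ∈ f P x, (Nat.card F - (r - 1) * d) := by rw [sum_const, smul_eq_mul]
    _ ≤ ∑ i ∈ f P x, #{a | Separates Γ h f P x i a} := sum_le_sum hfresh
    _ = #(codeLiftAssignment Γ h f S x) := by
      simp only [codeLiftAssignment, card_filter, sum_product]
      rfl

theorem ne_of_mem_codeLiftAssignment {x₁ x₂ : L} {i₁ i₂ : ι} {a : F} (hne : x₁ ≠ x₂)
    (hx₁ : x₁ ∈ prefixThrough S x₂)
    (hfx₁ : f (prefixThrough S x₁) x₁ = f (prefixThrough S x₂) x₁)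
    (h₁ : (i₁, a) ∈ codeLiftAssignment Γ h f S x₁)
    (h₂ : (i₂, a) ∈ codeLiftAssignment Γ h f S x₂)
    (hΓ : Γ x₁ i₁ = Γ x₂ i₂) : h x₁ a ≠ h x₂ a :=
  (mem_codeLiftAssignment.1 h₂).2 x₁ hx₁ hne ⟨i₁, hfx₁ ▸ (mem_codeLiftAssignment.1 h₁).1, hΓ⟩

end CodeLift

theorem OnlineMatching.codeLift {L R ι F V : Type*} [Finite F] {Γ : L → ι → R} {ℓ : ℝ}
    {r K d : ℕ} (hf : OnlineMatching Γ ℓ r K) (h : L → F → V)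
    (hd : ∀ x y, x ≠ y → {a | h x a = h y a}.ncard ≤ d) :
    OnlineMatching (fun x (q : ι × F) => (Γ x q.1, h x q.2, q.2))
      (ℓ * (Nat.card F - (r - 1) * d : ℕ)) 1 K := by
  classical
  cases nonempty_fintype F
  obtain ⟨f, hf₁, hf₂⟩ := hf
  have hlen {S : List L} (hS : S.length ≤ K) (x : L) : (prefixThrough S x).length ≤ K :=
    (prefixThrough_prefix S x).length_le.trans hS
  have hstable {S : List L} (hS : S.length ≤ K) {x y : L} (hx : x ∈ S)
      (hxy : prefixThrough S x <+: prefixThrough S y) :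
      f (prefixThrough S x) x = f (prefixThrough S y) x :=
    ((hf₁ _ (hlen hS x) x).2 (mem_prefixThrough hx)).2 _ (hlen hS y) hxy
  refine ⟨codeLiftAssignment Γ h f, fun S hS x => ⟨fun hx => ?_, fun hx => ⟨?_, ?_⟩⟩, ?_⟩
  · rw [codeLiftAssignment, prefixThrough_of_notMem hx, (hf₁ S hS x).1 hx, empty_product,
      filter_empty]
  · have hℓ := ((hf₁ _ (hlen hS x) x).2 (mem_prefixThrough hx)).1
    calc ℓ * ((Nat.card F - (r - 1) * d : ℕ) : ℝ)
        ≤ #(f (prefixThrough S x) x) * ((Nat.card F - (r - 1) * d : ℕ) : ℝ) :=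
          mul_le_mul_of_nonneg_right hℓ (Nat.cast_nonneg _)
      _ ≤ #(codeLiftAssignment Γ h f S x) := by
          exact_mod_cast mul_le_card_codeLiftAssignment hd hx fun p => hf₂ _ (hlen hS x) p
  · intro S' hS' hSS'
    rw [codeLiftAssignment, codeLiftAssignment, prefixThrough_eq_of_prefix hx hSS']
  · intro S hS p
    rw [Set.ncard_le_one_iff (S.finite_toSet.subset fun y hy => hy.1)]
    rintro x₁ x₂ ⟨hx₁, ⟨i₁, a⟩, hq₁, rfl⟩ ⟨hx₂, ⟨i₂, a₂⟩, hq₂, he⟩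
    obtain ⟨hΓ, hh, rfl⟩ := Prod.ext_iff.1 he |>.imp_right Prod.ext_iff.1
    by_contra hne
    rcases List.prefix_or_prefix_of_prefix (prefixThrough_prefix S x₁)
      (prefixThrough_prefix S x₂) with h₁₂ | h₂₁
    · exact ne_of_mem_codeLiftAssignment hne (h₁₂.mem (mem_prefixThrough hx₁))
        (hstable hS hx₁ h₁₂) hq₁ hq₂ hΓ.symm hh.symm
    · exact ne_of_mem_codeLiftAssignment (Ne.symm hne) (h₂₁.mem (mem_prefixThrough hx₂))
        (hstable hS hx₂ h₂₁) hq₂ hq₁ hΓ hh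

section BitPolynomial

open Polynomial

variable {F : Type*} [Field F] {n : ℕ}

noncomputable def bitsPoly (b : Fin n → Bool) : F[X] :=
  ∑ j : Fin n, C (if b j then (1 : F) else 0) * X ^ (j : ℕ)

theorem polyEval_eq_eval_bitsPoly (b : Fin n → Bool) (a : F) :
    polyEval b a = (bitsPoly b).eval a := by
  simp only [polyEval, bitsPoly, eval_finsetSum, eval_mul, eval_C, eval_pow, eval_X]

theorem degree_bitsPoly_lt (b : Fin n → Bool) : (bitsPoly b : F[X]).degree < n :=
  degree_sum_fin_lt _

theorem bitsPoly_injective : Function.Injective (bitsPoly : (Fin n → Bool) → F[X]) := by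
  intro b c hbc
  funext j
  have hj := congrArg (coeff · (j : ℕ)) hbc
  simp only [bitsPoly, finsetSum_coeff, coeff_C_mul_X_pow] at hj
  cases hb : b j <;> cases hc : c j <;> simp_all [Fin.val_inj]

theorem ncard_polyEval_eq_le {b c : Fin n → Bool} (hbc : b ≠ c) :
    {a : F | polyEval b a = polyEval c a}.ncard ≤ n - 1 := by
  classical
  set p : F[X] := bitsPoly b - bitsPoly c
  have hp : p ≠ 0 := sub_ne_zero.2 (bitsPoly_injective.ne hbc)
  have hroots : {a : F | polyEval b a = polyEval c a} = ↑p.roots.toFinset := by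
    ext a
    simp [p, mem_roots hp, polyEval_eq_eval_bitsPoly, sub_eq_zero]
  have hdeg : p.natDegree < n := (natDegree_lt_iff_degree_lt hp).2 <|
    (degree_sub_le _ _).trans_lt (max_lt (degree_bitsPoly_lt b) (degree_bitsPoly_lt c))
  rw [hroots, Set.ncard_coe_finset]
  have := (p.roots.toFinset_card_le).trans (card_roots' p)
  omega

end BitPolynomial

theorem one_sub_five_mul_le_mul_tsub {ε D : ℝ} {t κ : ℕ} (hε : 0 < ε) (hD : 0 ≤ D)
    (hκ : (κ : ℝ) ≤ ε * t) : (1 - 5 * ε) * (D * t) ≤ (1 - 2 * ε) * D * ((t - κ : ℕ) : ℝ) := by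
  have hct : ((t - κ : ℕ) : ℝ) ≤ t := Nat.cast_le.2 (Nat.sub_le t κ)
  have htc : (t : ℝ) ≤ ((t - κ : ℕ) : ℝ) + κ := by exact_mod_cast le_tsub_add
  have : (1 - 5 * ε) * t ≤ (1 - 2 * ε) * ((t - κ : ℕ) : ℝ) := by
    nlinarith [mul_nonneg hε.le (sub_nonneg.2 hct)]
  nlinarith [mul_le_mul_of_nonneg_left this hD]

theorem onlineMatching_noSharing_of_losslessExpander_general
    {L R : Type*} [Fintype L] [Fintype R] [DecidableEq R]
    (n : ℕ) (hn : 2 ≤ n) (D : ℕ) (Γ : L → Fin D → R)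
    (lab : L → Fin n → Bool) (hlab : Function.Injective lab)
    (Kmax : ℕ) (hK : 2 ≤ Kmax) (ε : ℝ) (hε0 : 0 < ε)
    (hexp : Expander Γ Kmax ((1 - ε) * (D : ℝ)))
    (r : ℕ) (hrdef : r = 2 * Nat.clog 2 Kmax)
    (s : ℕ) (hs : 1 ≤ s)
    (ht : (1 / ε) * ((n : ℝ) - 1) * ((r : ℝ) - 1) ≤ ((2 : ℝ) ^ s)) :
    Nat.card (R × GaloisField 2 s × GaloisField 2 s) = Fintype.card R * (2 ^ s) ^ 2 ∧
    Nat.card (Fin D × GaloisField 2 s) = D * 2 ^ s ∧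
    OnlineMatching
      (fun (x : L) (q : Fin D × GaloisField 2 s) =>
        ((Γ x q.1, polyEval (lab x) q.2, q.2) : R × GaloisField 2 s × GaloisField 2 s))
      ((1 - 5 * ε) * ((D : ℝ) * (2 : ℝ) ^ s)) 1 Kmax := by
  have hcard : Nat.card (GaloisField 2 s) = 2 ^ s := GaloisField.card 2 s (by omega)
  refine ⟨by simp [hcard, sq], by simp [hcard], ?_⟩
  have hm : 1 ≤ Nat.clog 2 Kmax := Nat.clog_pos one_lt_two hK
  have hbase := (show Expander Γ Kmax ((1 - ε) * Fintype.card (Fin D)) by simpa using hexp)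
    |>.onlineMatching hε0 (succ_lt_two_pow_clog_succ hK)
  have hlift := hbase.codeLift (fun x => polyEval (F := GaloisField 2 s) (lab x))
    (fun x y hxy => ncard_polyEval_eq_le (hlab.ne hxy))
  have hκ : (((r - 1) * (n - 1) : ℕ) : ℝ) ≤ ε * (2 ^ s : ℕ) := by
    rw [one_div, mul_assoc, inv_mul_le_iff₀ hε0] at ht
    push_cast [Nat.cast_sub (by omega : 1 ≤ r), Nat.cast_sub (by omega : 1 ≤ n)]
    linarith
  rw [Fintype.card_fin, hcard, ← hrdef] at hlift
  refine hlift.mono ?_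
  exact_mod_cast one_sub_five_mul_le_mul_tsub hε0 D.cast_nonneg hκ

/-- **Online matching properties of lossless expanders (with no sharing).**
Let `G` be a bipartite graph `Γ : L × [D] → R` (with `D ≥ 1`) whose left nodes are
labeled by distinct strings in `{0,1}^n` (`n ≥ 2`) and which is a
`(K_max, (1−ε)D)` expander, where `0 < ε < 1` and `K_max ≥ 2`. Let
`r = 2⌈log₂ K_max⌉` and let `t = 2^s` be the smallest power of two with
`t ≥ (1/ε)(n−1)(r−1)` and `t ≥ 2`. Then the graph `G'` obtained by the `G ↦ G'`
transformation has left side `L`, right side of size `|R|·t²`, left degree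
`D' = D·t`, and admits `((1−5ε)·D', 1)` online matching up to size `K_max`. -/
theorem onlineMatching_noSharing_of_losslessExpander
    {L R : Type*} [Fintype L] [Fintype R] [DecidableEq L] [DecidableEq R]
    (n : ℕ) (hn : 2 ≤ n) (D : ℕ) (hD : 1 ≤ D) (Γ : L → Fin D → R)
    (lab : L → Fin n → Bool) (hlab : Function.Injective lab)
    (Kmax : ℕ) (hK : 2 ≤ Kmax) (ε : ℝ) (hε0 : 0 < ε) (hε1 : ε < 1)
    (hexp : Expander Γ Kmax ((1 - ε) * (D : ℝ)))
    (r : ℕ) (hrdef : r = 2 * Nat.clog 2 Kmax)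
    (s : ℕ) (hs : 1 ≤ s)
    (ht : (1 / ε) * ((n : ℝ) - 1) * ((r : ℝ) - 1) ≤ ((2 : ℝ) ^ s))
    (hmin : ∀ s' : ℕ, 1 ≤ s' →
      (1 / ε) * ((n : ℝ) - 1) * ((r : ℝ) - 1) ≤ ((2 : ℝ) ^ s') → s ≤ s') :
    Nat.card (R × GaloisField 2 s × GaloisField 2 s) = Fintype.card R * (2 ^ s) ^ 2 ∧
    Nat.card (Fin D × GaloisField 2 s) = D * 2 ^ s ∧
    OnlineMatching
      (fun (x : L) (q : Fin D × GaloisField 2 s) =>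
        ((Γ x q.1, polyEval (lab x) q.2, q.2) : R × GaloisField 2 s × GaloisField 2 s))
      ((1 - 5 * ε) * ((D : ℝ) * (2 : ℝ) ^ s)) 1 Kmax :=
  onlineMatching_noSharing_of_losslessExpander_general n hn D Γ lab hlab Kmax hK ε hε0 hexp r hrdef
    s hs ht
end
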